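/- arXiv:2106.05464 — 4 statements merged into one kernel-verified Lean document; each statement's English description precedes it below -/
import Mathlib

section
/- Let M be a von Neumann algebra with a faithful state φ, let T : M_m → M be a ucp map, put ψ := φ∘T, and let S : M → M_m be a ucp map satisfying ψ∘S = φ and ψ(x* S(y)) = φ(T(x)* y) for all x ∈ M_m, y ∈ M. If u ∈ M and v ∈ M_m are unitaries such that ‖T(v) − u‖_φ < ε for some ε > 0, then ‖S(u) − v‖_ψ² < 2ε and ‖T(S(u)) − u‖_φ < (2ε)^{1/2} + ε. -/
open scoped ComplexOrder

noncomputable section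

/-- A von Neumann algebra is closed under the complex scalar action. -/
instance VonNeumannAlgebra.instSMulMemClass {H : Type*} [NormedAddCommGroup H]
    [InnerProductSpace ℂ H] [CompleteSpace H] :
    SMulMemClass (VonNeumannAlgebra H) ℂ (H →L[ℂ] H) :=
  ⟨fun {s} c _ ha => s.toStarSubalgebra.smul_mem ha c⟩

/-- An element of a `*`-ring is positive if it is of the form `star z * z`. -/
def IsPosElem {A : Type*} [Mul A] [Star A] (x : A) : Prop :=
  ∃ z : A, x = star z * z

/-- A linear map between complex `*`-algebras is completely positive if all of its
matrix amplifications map positive elements to positive elements. -/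
def IsCPMap {A B : Type*} [Ring A] [StarRing A] [Algebra ℂ A]
    [Ring B] [StarRing B] [Algebra ℂ B] (Φ : A →ₗ[ℂ] B) : Prop :=
  ∀ (k : ℕ) (x : Matrix (Fin k) (Fin k) A), IsPosElem x → IsPosElem (x.map Φ)

/-- A unital completely positive map. -/
def IsUCPMap {A B : Type*} [Ring A] [StarRing A] [Algebra ℂ A]
    [Ring B] [StarRing B] [Algebra ℂ B] (Φ : A →ₗ[ℂ] B) : Prop :=
  Φ 1 = 1 ∧ IsCPMap Φ

/-- A state on a complex `*`-algebra: unital and positive. -/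
def IsState {A : Type*} [Ring A] [StarRing A] [Algebra ℂ A] (φ : A →ₗ[ℂ] ℂ) : Prop :=
  φ 1 = 1 ∧ ∀ x : A, 0 ≤ φ (star x * x)

/-- A positive linear map is faithful if `Φ (star x * x) = 0` implies `x = 0`. -/
def IsFaithfulPosMap {A B : Type*} [Ring A] [StarRing A] [Algebra ℂ A]
    [AddCommMonoid B] [Module ℂ B] (Φ : A →ₗ[ℂ] B) : Prop :=
  ∀ x : A, Φ (star x * x) = 0 → x = 0

/-- The normalized trace `tr_m` on `m × m` complex matrices. -/
def trNorm (m : ℕ) (x : Matrix (Fin m) (Fin m) ℂ) : ℂ :=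
  x.trace / (m : ℂ)

/-- `‖x‖_φ = φ(x* x)^{1/2}`. -/
def stateNorm {A : Type*} [Ring A] [StarRing A] [Algebra ℂ A]
    (φ : A →ₗ[ℂ] ℂ) (x : A) : ℝ :=
  Real.sqrt (φ (star x * x)).re

/-!
With `⟪x, y⟫ = φ (x* y)` a state is a semi-inner product, so Cauchy–Schwarz turns
`‖T(v) - u‖_φ < ε` into `Re φ(T(v)* u) > 1 - ε`. The Kadison–Schwarz inequality
`S(u)* S(u) ≤ S(u* u) = 1` and the duality `ψ(v* S(u)) = φ(T(v)* u)` give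
`‖S(u) - v‖_ψ² ≤ 2 - 2 Re φ(T(v)* u) < 2ε`. Kadison–Schwarz for `T` gives
`‖T(x)‖_φ ≤ ‖x‖_ψ`, and the triangle inequality through `T(v)` yields the second estimate.
-/

namespace IsState

variable {A : Type*} [Ring A] [StarRing A] [Algebra ℂ A] {ω : A →ₗ[ℂ] ℂ}

lemma re_nonneg (hω : IsState ω) (x : A) : 0 ≤ (ω (star x * x)).re :=
  (Complex.nonneg_iff.mp (hω.2 x)).1

lemma im_eq_zero (hω : IsState ω) (x : A) : (ω (star x * x)).im = 0 :=
  (Complex.nonneg_iff.mp (hω.2 x)).2.symm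

lemma stateNorm_sq (hω : IsState ω) (x : A) : stateNorm ω x ^ 2 = (ω (star x * x)).re :=
  Real.sq_sqrt (hω.re_nonneg x)

lemma stateNorm_eq_one (hω : IsState ω) {u : A} (hu : star u * u = 1) : stateNorm ω u = 1 := by
  simp [stateNorm, hu, hω.1]

lemma im_add_im_swap (hω : IsState ω) (a b : A) :
    (ω (star a * b)).im + (ω (star b * a)).im = 0 := by
  have h := hω.im_eq_zero (a + b)
  rw [star_add, add_mul, mul_add, mul_add] at h
  simpa only [map_add, Complex.add_im, hω.im_eq_zero, zero_add, add_zero, add_comm] using h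

variable [StarModule ℂ A]

lemma conj_apply_star_mul (hω : IsState ω) (a b : A) :
    starRingEnd ℂ (ω (star a * b)) = ω (star b * a) := by
  -- the imaginary parts at `(a, I • b)` are the real parts at `(a, b)`
  have hre := hω.im_add_im_swap a (Complex.I • b)
  rw [mul_smul_comm, star_smul, smul_mul_assoc, map_smul, map_smul, Complex.star_def,
    Complex.conj_I] at hre
  simp only [smul_eq_mul, Complex.mul_im, Complex.I_re, Complex.I_im, Complex.neg_re,
    Complex.neg_im] at hre
  apply Complex.ext
  · simp only [Complex.conj_re]; linarith
  · simp only [Complex.conj_im]; linarith [hω.im_add_im_swap a b]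

@[reducible] def preInnerProductSpaceCore (hω : IsState ω) : PreInnerProductSpace.Core ℂ A where
  inner x y := ω (star x * y)
  conj_inner_symm x y := hω.conj_apply_star_mul y x
  re_inner_nonneg := hω.re_nonneg
  add_left x y z := by simp only [star_add, add_mul, map_add]
  smul_left x y r := by simp only [star_smul, smul_mul_assoc, map_smul, smul_eq_mul]; rfl

lemma norm_apply_star_mul_le (hω : IsState ω) (a b : A) :
    ‖ω (star a * b)‖ ≤ stateNorm ω a * stateNorm ω b :=
  letI := hω.preInnerProductSpaceCore
  InnerProductSpace.Core.norm_inner_le_norm a b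

lemma stateNorm_add_le (hω : IsState ω) (a b : A) :
    stateNorm ω (a + b) ≤ stateNorm ω a + stateNorm ω b :=
  letI := hω.preInnerProductSpaceCore
  letI := InnerProductSpace.Core.toSeminormedAddCommGroup (𝕜 := ℂ) (F := A)
  norm_add_le a b

lemma stateNorm_sub_sq (hω : IsState ω) (a b : A) :
    stateNorm ω (a - b) ^ 2
      = stateNorm ω a ^ 2 - 2 * (ω (star b * a)).re + stateNorm ω b ^ 2 := by
  have hexp : star (a - b) * (a - b) = star a * a - star a * b - star b * a + star b * b := by
    simp only [star_sub]; noncomm_ring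
  have hre : (ω (star a * b)).re = (ω (star b * a)).re := by
    rw [← hω.conj_apply_star_mul b a, Complex.conj_re]
  simp only [hω.stateNorm_sq, hexp, map_add, map_sub, Complex.add_re, Complex.sub_re, hre]
  ring

lemma one_sub_stateNorm_le_re (hω : IsState ω) {u : A} (hu : star u * u = 1) (a : A) :
    1 - stateNorm ω (a - u) ≤ (ω (star a * u)).re := by
  have hsplit : ω (star a * u) = ω (star (a - u) * u) + 1 := by
    rw [star_sub, sub_mul, map_sub, hu, hω.1, sub_add_cancel]
  have hcs := hω.norm_apply_star_mul_le (a - u) u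
  rw [hω.stateNorm_eq_one hu, mul_one] at hcs
  rw [hsplit, Complex.add_re, Complex.one_re]
  linarith [Complex.abs_re_le_norm (ω (star (a - u) * u)), neg_abs_le (ω (star (a - u) * u)).re]

end IsState

section CompletelyPositive

variable {A B : Type*} [Ring A] [StarRing A] [Algebra ℂ A] [Ring B] [StarRing B] [Algebra ℂ B]
  {Φ : A →ₗ[ℂ] B}

lemma IsCPMap.map_star (hΦ : IsCPMap Φ) (x : A) : Φ (star x) = star (Φ x) := by
  -- the off-diagonal entries of `star z * z` are `x` and `star x`, and its image is self-adjoint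
  set z : Matrix (Fin 2) (Fin 2) A := !![1, x; 0, 0]
  obtain ⟨W, hW⟩ := hΦ 2 (star z * z) ⟨z, rfl⟩
  have hsa : star ((star z * z).map Φ) = (star z * z).map Φ := by
    rw [hW, star_mul, star_star]
  have h := congrArg (fun N => N 1 0) hsa
  simpa [z, Matrix.mul_apply, Fin.sum_univ_two, Matrix.star_eq_conjTranspose] using h.symm

lemma IsCPMap.apply_sum_nonneg (hΦ : IsCPMap Φ) {ω : B →ₗ[ℂ] ℂ} (hω : IsState ω) {k : ℕ}
    {P : Matrix (Fin k) (Fin k) A} (hP : IsPosElem P) (a : Fin k → B) :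
    0 ≤ ω (∑ i, ∑ j, star (a i) * Φ (P i j) * a j) := by
  obtain ⟨W, hW⟩ := hΦ k P hP
  have hentry : ∀ i j, Φ (P i j) = ∑ l, star (W l i) * W l j := fun i j => by
    simpa [Matrix.mul_apply, Matrix.star_eq_conjTranspose] using congrArg (fun N => N i j) hW
  have hsq : ∑ i, ∑ j, star (a i) * Φ (P i j) * a j
      = ∑ l, star (∑ j, W l j * a j) * ∑ j, W l j * a j := by
    calc ∑ i, ∑ j, star (a i) * Φ (P i j) * a j
        = ∑ i, ∑ j, ∑ l, star (a i) * (star (W l i) * (W l j * a j)) := by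
          simp_rw [hentry, Finset.mul_sum, Finset.sum_mul, mul_assoc]
      _ = ∑ l, ∑ i, ∑ j, star (a i) * (star (W l i) * (W l j * a j)) :=
          (Finset.sum_congr rfl fun i _ => Finset.sum_comm).trans Finset.sum_comm
      _ = ∑ l, star (∑ j, W l j * a j) * ∑ j, W l j * a j := by
          simp_rw [star_sum, star_mul, Finset.sum_mul, Finset.mul_sum, mul_assoc]
  rw [hsq, map_sum]
  exact Finset.sum_nonneg fun l _ => hω.2 _

/-- The Kadison–Schwarz inequality, tested against a state. -/
lemma IsUCPMap.apply_star_mul_le (hΦ : IsUCPMap Φ) {ω : B →ₗ[ℂ] ℂ} (hω : IsState ω) (x : A) :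
    ω (star (Φ x) * Φ x) ≤ ω (Φ (star x * x)) := by
  set z : Matrix (Fin 2) (Fin 2) A := !![1, x; 0, 0]
  have hz : ∀ i j, (star z * z) i j = !![1, x; star x, star x * x] i j := by
    intro i j
    fin_cases i <;> fin_cases j <;>
      simp [z, Matrix.mul_apply, Fin.sum_univ_two, Matrix.star_eq_conjTranspose]
  have h := hΦ.2.apply_sum_nonneg hω ⟨z, rfl⟩ ![-Φ x, 1]
  have hsum : ∑ i, ∑ j, star (![-Φ x, 1] i) * Φ ((star z * z) i j) * ![-Φ x, 1] j
      = Φ (star x * x) - star (Φ x) * Φ x := by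
    simp only [Fin.sum_univ_two, hz]
    simp only [Matrix.cons_val_zero, Matrix.cons_val_one, Matrix.of_apply, Matrix.cons_val',
      Matrix.cons_val_fin_one, star_neg, star_one, hΦ.1, hΦ.2.map_star]
    noncomm_ring
  rwa [hsum, map_sub, sub_nonneg] at h

lemma IsUCPMap.isState_comp (hΦ : IsUCPMap Φ) {ω : B →ₗ[ℂ] ℂ} (hω : IsState ω) :
    IsState (ω ∘ₗ Φ) :=
  ⟨by rw [LinearMap.comp_apply, hΦ.1, hω.1],
    fun x => (hω.2 (Φ x)).trans (hΦ.apply_star_mul_le hω x)⟩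

lemma IsUCPMap.stateNorm_apply_le (hΦ : IsUCPMap Φ) {ω : B →ₗ[ℂ] ℂ} (hω : IsState ω) (x : A) :
    stateNorm ω (Φ x) ≤ stateNorm (ω ∘ₗ Φ) x :=
  Real.sqrt_le_sqrt (Complex.le_def.mp (hΦ.apply_star_mul_le hω x)).1

end CompletelyPositive

theorem corollary_estimates_general {H : Type*} [NormedAddCommGroup H] [InnerProductSpace ℂ H]
    [CompleteSpace H]
    (M : VonNeumannAlgebra H) (φ : M →ₗ[ℂ] ℂ) (hφ : IsState φ)
    (m : ℕ) (T : Matrix (Fin m) (Fin m) ℂ →ₗ[ℂ] M) (hT : IsUCPMap T)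
    (S : M →ₗ[ℂ] Matrix (Fin m) (Fin m) ℂ) (hS : IsUCPMap S)
    -- `ψ(x* S(y)) = φ(T(x)* y)`
    (hS2 : ∀ (x : Matrix (Fin m) (Fin m) ℂ) (y : M),
      φ (T (star x * S y)) = φ (star (T x) * y))
    (u : M) (hu : u ∈ unitary M)
    (v : Matrix (Fin m) (Fin m) ℂ) (hv : v ∈ unitary (Matrix (Fin m) (Fin m) ℂ))
    (ε : ℝ) (hclose : stateNorm φ (T v - u) < ε) :
    stateNorm (φ.comp T) (S u - v) ^ 2 < 2 * ε ∧
      stateNorm φ (T (S u) - u) < Real.sqrt (2 * ε) + ε := by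
  have hψ : IsState (φ ∘ₗ T) := hT.isState_comp hφ
  have hSu : stateNorm (φ ∘ₗ T) (S u) ^ 2 ≤ 1 := by
    have h := (Complex.le_def.mp (hS.apply_star_mul_le hψ u)).1
    rwa [Unitary.star_mul_self_of_mem hu, hS.1, hψ.1, Complex.one_re, ← hψ.stateNorm_sq] at h
  have hre : 1 - ε < (φ (star (T v) * u)).re :=
    (sub_lt_sub_left hclose 1).trans_le
      (hφ.one_sub_stateNorm_le_re (Unitary.star_mul_self_of_mem hu) (T v))
  have hfirst : stateNorm (φ ∘ₗ T) (S u - v) ^ 2 < 2 * ε := by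
    rw [hψ.stateNorm_sub_sq, hψ.stateNorm_eq_one (Unitary.star_mul_self_of_mem hv),
      LinearMap.comp_apply, hS2]
    linarith
  refine ⟨hfirst, ?_⟩
  calc stateNorm φ (T (S u) - u) = stateNorm φ (T (S u - v) + (T v - u)) := by
        rw [map_sub, sub_add_sub_cancel]
    _ ≤ stateNorm φ (T (S u - v)) + stateNorm φ (T v - u) := hφ.stateNorm_add_le _ _
    _ < Real.sqrt (2 * ε) + ε := add_lt_add
        ((hT.stateNorm_apply_le hφ _).trans_lt (Real.lt_sqrt (Real.sqrt_nonneg _) |>.mpr hfirst))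
        hclose

theorem corollary_estimates {H : Type*} [NormedAddCommGroup H] [InnerProductSpace ℂ H]
    [CompleteSpace H]
    (M : VonNeumannAlgebra H) (φ : M →ₗ[ℂ] ℂ) (hφ : IsState φ) (hφf : IsFaithfulPosMap φ)
    (m : ℕ) (T : Matrix (Fin m) (Fin m) ℂ →ₗ[ℂ] M) (hT : IsUCPMap T)
    (S : M →ₗ[ℂ] Matrix (Fin m) (Fin m) ℂ) (hS : IsUCPMap S)
    -- `ψ ∘ S = φ`, where `ψ := φ ∘ T`
    (hS1 : ∀ y : M, φ (T (S y)) = φ y)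
    -- `ψ(x* S(y)) = φ(T(x)* y)`
    (hS2 : ∀ (x : Matrix (Fin m) (Fin m) ℂ) (y : M),
      φ (T (star x * S y)) = φ (star (T x) * y))
    (u : M) (hu : u ∈ unitary M)
    (v : Matrix (Fin m) (Fin m) ℂ) (hv : v ∈ unitary (Matrix (Fin m) (Fin m) ℂ))
    (ε : ℝ) (hε : 0 < ε) (hclose : stateNorm φ (T v - u) < ε) :
    stateNorm (φ.comp T) (S u - v) ^ 2 < 2 * ε ∧
      stateNorm φ (T (S u) - u) < Real.sqrt (2 * ε) + ε :=
  corollary_estimates_general M φ hφ m T hT S hS hS2 u hu v hv ε hclose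
end
end

section
/- Let M be a von Neumann algebra, H a Hilbert M-bimodule, and (ξ_1,…,ξ_n), (η_1,…,η_n) two n-tuples of unit vectors in H. Suppose ε > 0, δ > 0 and a_1,…,a_p ∈ M satisfy, for every 1 ≤ k ≤ n: ‖(1 − Σ_j a_j*a_j)ξ_k‖ < ε, ‖(1 − Σ_j a_j*a_j)η_k‖ < ε, ‖ξ_k(1 − Σ_j a_j*a_j)‖ < ε, ‖η_k(1 − Σ_j a_j*a_j)‖ < ε, ‖(1 − Σ_j a_j a_j*)ξ_k‖ < ε, ‖(1 − Σ_j a_j a_j*)η_k‖ < ε, ‖ξ_k(1 − Σ_j a_j a_j*)‖ < ε, ‖η_k(1 − Σ_j a_j a_j*)‖ < ε, and Σ_j ‖a_j ξ_k − η_k a_j‖² < δ. Then Σ_j ‖a_j* η_k − ξ_k a_j*‖² < 4ε + δ for every 1 ≤ k ≤ n; in particular, if 4ε ≤ δ then Σ_j ‖a_j* η_k − ξ_k a_j*‖² < 2δ. -/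
noncomputable section

/-- A Hilbert bimodule over a concrete von Neumann algebra `M ⊆ B(K)`: a complex Hilbert
space `E` together with a unital `*`-homomorphism `L : M → B(E)` (the left action) and a
unital `*`-antihomomorphism `M → B(E)` (the right action, encoded as a unital
`*`-homomorphism `R` on the opposite algebra `Mᵐᵒᵖ`) with commuting ranges. -/
structure HilbertBimodule {K : Type*} [NormedAddCommGroup K] [InnerProductSpace ℂ K]
    [CompleteSpace K] (M : VonNeumannAlgebra K)
    (E : Type*) [NormedAddCommGroup E] [InnerProductSpace ℂ E] [CompleteSpace E] where
  L : M →⋆ₐ[ℂ] (E →L[ℂ] E)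
  R : (↥M)ᵐᵒᵖ →⋆ₐ[ℂ] (E →L[ℂ] E)
  commutes : ∀ (x y : M) (ξ : E),
    L x (R (MulOpposite.op y) ξ) = R (MulOpposite.op y) (L x ξ)

namespace HilbertBimodule

variable {K : Type*} [NormedAddCommGroup K] [InnerProductSpace ℂ K] [CompleteSpace K]
  {M : VonNeumannAlgebra K} {E : Type*} [NormedAddCommGroup E] [InnerProductSpace ℂ E]
  [CompleteSpace E]

/-- The left action `x ξ`. -/
def lsmul (b : HilbertBimodule M E) (x : M) (ξ : E) : E := b.L x ξ

/-- The right action `ξ x`. -/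
def rsmul (b : HilbertBimodule M E) (ξ : E) (x : M) : E := b.R (MulOpposite.op x) ξ

end HilbertBimodule

/-!
Expanding the squares, `∑ ‖a_j ξ - η a_j‖²` and `∑ ‖a_j* η - ξ a_j*‖²` have the same cross terms,
because `⟪a* η, ξ a*⟫ = ⟪η a, a ξ⟫` by commutation of the two actions. They differ only through the
diagonal terms `⟪ξ, (∑ a*a) ξ⟫` against `⟪ξ, ξ (∑ a*a)⟫` and `⟪η, (∑ a a*) η⟫` against
`⟪η, η (∑ a a*)⟫`, and each of these two differences is at most `2ε` for unit vectors, since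
`∑ a*a` and `∑ a a*` are almost `1` on both sides.
-/

open scoped InnerProductSpace
open RCLike

namespace HilbertBimodule

variable {K : Type*} [NormedAddCommGroup K] [InnerProductSpace ℂ K] [CompleteSpace K]
  {M : VonNeumannAlgebra K} {E : Type*} [NormedAddCommGroup E] [InnerProductSpace ℂ E]
  [CompleteSpace E] (b : HilbertBimodule M E)

@[simp]
lemma lsmul_one (v : E) : b.lsmul 1 v = v := by
  simp [lsmul]

@[simp]
lemma rsmul_one (v : E) : b.rsmul v 1 = v := by
  simp [rsmul]

lemma lsmul_sub (x y : M) (v : E) : b.lsmul (x - y) v = b.lsmul x v - b.lsmul y v := by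
  simp [lsmul]

lemma rsmul_sub (x y : M) (v : E) : b.rsmul v (x - y) = b.rsmul v x - b.rsmul v y := by
  simp [rsmul]

lemma lsmul_mul (x y : M) (v : E) : b.lsmul (x * y) v = b.lsmul x (b.lsmul y v) := by
  simp [lsmul]

lemma rsmul_mul (x y : M) (v : E) : b.rsmul v (x * y) = b.rsmul (b.rsmul v x) y := by
  simp [rsmul]

lemma lsmul_sum {ι : Type*} (s : Finset ι) (x : ι → M) (v : E) :
    b.lsmul (∑ j ∈ s, x j) v = ∑ j ∈ s, b.lsmul (x j) v := by
  simp [lsmul]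

lemma rsmul_sum {ι : Type*} (s : Finset ι) (x : ι → M) (v : E) :
    b.rsmul v (∑ j ∈ s, x j) = ∑ j ∈ s, b.rsmul v (x j) := by
  simp [rsmul, Finset.op_sum]

lemma lsmul_rsmul_comm (x y : M) (v : E) :
    b.lsmul x (b.rsmul v y) = b.rsmul (b.lsmul x v) y :=
  b.commutes x y v

lemma inner_lsmul_left (x : M) (v w : E) : ⟪b.lsmul x v, w⟫_ℂ = ⟪v, b.lsmul (star x) w⟫_ℂ := by
  rw [lsmul, lsmul, map_star, ContinuousLinearMap.star_eq_adjoint,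
    ContinuousLinearMap.adjoint_inner_right]

lemma inner_rsmul_left (x : M) (v w : E) : ⟪b.rsmul v x, w⟫_ℂ = ⟪v, b.rsmul w (star x)⟫_ℂ := by
  rw [rsmul, rsmul, MulOpposite.op_star, map_star, ContinuousLinearMap.star_eq_adjoint,
    ContinuousLinearMap.adjoint_inner_right]

lemma norm_lsmul_sq (x : M) (v : E) :
    ‖b.lsmul x v‖ ^ 2 = re ⟪v, b.lsmul (star x * x) v⟫_ℂ := by
  rw [← inner_self_eq_norm_sq (𝕜 := ℂ), inner_lsmul_left, lsmul_mul]

lemma norm_rsmul_sq (x : M) (v : E) :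
    ‖b.rsmul v x‖ ^ 2 = re ⟪v, b.rsmul v (x * star x)⟫_ℂ := by
  rw [← inner_self_eq_norm_sq (𝕜 := ℂ), inner_rsmul_left, rsmul_mul]

lemma re_inner_lsmul_star_rsmul_star (x : M) (v w : E) :
    re ⟪b.lsmul (star x) w, b.rsmul v (star x)⟫_ℂ = re ⟪b.lsmul x v, b.rsmul w x⟫_ℂ := by
  rw [inner_lsmul_left, star_star, lsmul_rsmul_comm, ← inner_rsmul_left, inner_re_symm]

variable {ι : Type*} (s : Finset ι)

lemma sum_norm_lsmul_sub_rsmul_sq (x : ι → M) (v w : E) :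
    ∑ j ∈ s, ‖b.lsmul (x j) v - b.rsmul w (x j)‖ ^ 2
      = re ⟪v, b.lsmul (∑ j ∈ s, star (x j) * x j) v⟫_ℂ
        + re ⟪w, b.rsmul w (∑ j ∈ s, x j * star (x j))⟫_ℂ
        - 2 * ∑ j ∈ s, re ⟪b.lsmul (x j) v, b.rsmul w (x j)⟫_ℂ := by
  simp only [norm_sub_sq (𝕜 := ℂ), Finset.sum_add_distrib, Finset.sum_sub_distrib,
    norm_lsmul_sq, norm_rsmul_sq, lsmul_sum, rsmul_sum, inner_sum, map_sum, Finset.mul_sum]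
  ring

lemma sum_norm_star_sub_sq_eq (x : ι → M) (v w : E) :
    ∑ j ∈ s, ‖b.lsmul (star (x j)) w - b.rsmul v (star (x j))‖ ^ 2
      = ∑ j ∈ s, ‖b.lsmul (x j) v - b.rsmul w (x j)‖ ^ 2
        + (re ⟪w, b.lsmul (∑ j ∈ s, x j * star (x j)) w⟫_ℂ
            - re ⟪w, b.rsmul w (∑ j ∈ s, x j * star (x j))⟫_ℂ)
        - (re ⟪v, b.lsmul (∑ j ∈ s, star (x j) * x j) v⟫_ℂ
            - re ⟪v, b.rsmul v (∑ j ∈ s, star (x j) * x j)⟫_ℂ) := by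
  simp only [sum_norm_lsmul_sub_rsmul_sq, star_star, re_inner_lsmul_star_rsmul_star]
  ring

lemma abs_re_inner_lsmul_sub_rsmul_le (y : M) (v : E) :
    |re ⟪v, b.lsmul y v⟫_ℂ - re ⟪v, b.rsmul v y⟫_ℂ|
      ≤ ‖v‖ * (‖b.lsmul (1 - y) v‖ + ‖b.rsmul v (1 - y)‖) := by
  have hdiff : b.lsmul y v - b.rsmul v y = b.rsmul v (1 - y) - b.lsmul (1 - y) v := by
    simp only [lsmul_sub, rsmul_sub, lsmul_one, rsmul_one]
    abel
  calc |re ⟪v, b.lsmul y v⟫_ℂ - re ⟪v, b.rsmul v y⟫_ℂ|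
      = |re ⟪v, b.rsmul v (1 - y) - b.lsmul (1 - y) v⟫_ℂ| := by
        rw [← hdiff, inner_sub_right, map_sub]
    _ ≤ ‖v‖ * ‖b.rsmul v (1 - y) - b.lsmul (1 - y) v‖ :=
        (abs_re_le_norm _).trans (norm_inner_le_norm _ _)
    _ ≤ ‖v‖ * (‖b.lsmul (1 - y) v‖ + ‖b.rsmul v (1 - y)‖) := by
        gcongr
        exact (norm_sub_le _ _).trans_eq (add_comm _ _)

end HilbertBimodule

open HilbertBimodule in
theorem remark_almost_d_general {K : Type*} [NormedAddCommGroup K] [InnerProductSpace ℂ K]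
    [CompleteSpace K] {M : VonNeumannAlgebra K}
    {E : Type*} [NormedAddCommGroup E] [InnerProductSpace ℂ E] [CompleteSpace E]
    (b : HilbertBimodule M E) {n : ℕ} (ξ η : Fin n → E)
    (hξ : ∀ k, ‖ξ k‖ = 1) (hη : ∀ k, ‖η k‖ = 1)
    (ε δ : ℝ)
    {p : ℕ} (a : Fin p → M)
    (ha1l : ∀ k, ‖b.lsmul (1 - ∑ j, star (a j) * a j) (ξ k)‖ < ε)
    (ha2l : ∀ k, ‖b.rsmul (ξ k) (1 - ∑ j, star (a j) * a j)‖ < ε)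
    (hb1r : ∀ k, ‖b.lsmul (1 - ∑ j, a j * star (a j)) (η k)‖ < ε)
    (hb2r : ∀ k, ‖b.rsmul (η k) (1 - ∑ j, a j * star (a j))‖ < ε)
    (hc : ∀ k, ∑ j, ‖b.lsmul (a j) (ξ k) - b.rsmul (η k) (a j)‖ ^ 2 < δ) :
    (∀ k, ∑ j, ‖b.lsmul (star (a j)) (η k) - b.rsmul (ξ k) (star (a j))‖ ^ 2 < 4 * ε + δ) ∧
      (4 * ε ≤ δ →
        ∀ k, ∑ j, ‖b.lsmul (star (a j)) (η k) - b.rsmul (ξ k) (star (a j))‖ ^ 2 < 2 * δ) := by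
  have key : ∀ k, ∑ j, ‖b.lsmul (star (a j)) (η k) - b.rsmul (ξ k) (star (a j))‖ ^ 2
      < 4 * ε + δ := by
    intro k
    have hηk := abs_le.mp (b.abs_re_inner_lsmul_sub_rsmul_le (∑ j, a j * star (a j)) (η k))
    have hξk := abs_le.mp (b.abs_re_inner_lsmul_sub_rsmul_le (∑ j, star (a j) * a j) (ξ k))
    rw [hη k, one_mul] at hηk
    rw [hξ k, one_mul] at hξk
    rw [sum_norm_star_sub_sq_eq]
    linarith [hc k, ha1l k, ha2l k, hb1r k, hb2r k]
  exact ⟨key, fun h k => (key k).trans_le (by linarith)⟩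

theorem remark_almost_d {K : Type*} [NormedAddCommGroup K] [InnerProductSpace ℂ K]
    [CompleteSpace K] {M : VonNeumannAlgebra K}
    {E : Type*} [NormedAddCommGroup E] [InnerProductSpace ℂ E] [CompleteSpace E]
    (b : HilbertBimodule M E) {n : ℕ} (ξ η : Fin n → E)
    (hξ : ∀ k, ‖ξ k‖ = 1) (hη : ∀ k, ‖η k‖ = 1)
    (ε δ : ℝ) (hε : 0 < ε) (hδ : 0 < δ)
    {p : ℕ} (a : Fin p → M)
    (ha1l : ∀ k, ‖b.lsmul (1 - ∑ j, star (a j) * a j) (ξ k)‖ < ε)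
    (ha1r : ∀ k, ‖b.lsmul (1 - ∑ j, star (a j) * a j) (η k)‖ < ε)
    (ha2l : ∀ k, ‖b.rsmul (ξ k) (1 - ∑ j, star (a j) * a j)‖ < ε)
    (ha2r : ∀ k, ‖b.rsmul (η k) (1 - ∑ j, star (a j) * a j)‖ < ε)
    (hb1l : ∀ k, ‖b.lsmul (1 - ∑ j, a j * star (a j)) (ξ k)‖ < ε)
    (hb1r : ∀ k, ‖b.lsmul (1 - ∑ j, a j * star (a j)) (η k)‖ < ε)
    (hb2l : ∀ k, ‖b.rsmul (ξ k) (1 - ∑ j, a j * star (a j))‖ < ε)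
    (hb2r : ∀ k, ‖b.rsmul (η k) (1 - ∑ j, a j * star (a j))‖ < ε)
    (hc : ∀ k, ∑ j, ‖b.lsmul (a j) (ξ k) - b.rsmul (η k) (a j)‖ ^ 2 < δ) :
    (∀ k, ∑ j, ‖b.lsmul (star (a j)) (η k) - b.rsmul (ξ k) (star (a j))‖ ^ 2 < 4 * ε + δ) ∧
      (4 * ε ≤ δ →
        ∀ k, ∑ j, ‖b.lsmul (star (a j)) (η k) - b.rsmul (ξ k) (star (a j))‖ ^ 2 < 2 * δ) :=
  remark_almost_d_general b ξ η hξ hη ε δ a ha1l ha2l hb1r hb2r hc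
end
end

section
/- Let M be a von Neumann algebra and φ a faithful state on M. Suppose φ is ℚ-stable, i.e., for every n ∈ ℕ and all strictly positive rationals q_1,…,q_n with q_1 + ⋯ + q_n = 1 there exist isometries v_1,…,v_n ∈ M (v_j*v_j = 1) with Σ_j v_j v_j* = 1 and φ(v_j x) = q_j φ(x v_j) for all x ∈ M. Then φ is ℚ⁺-stable: for every n ∈ ℕ, every rational 0 < r ≤ 1 and all γ_1,…,γ_n ∈ ℚ⁺ with r(γ_1 + ⋯ + γ_n) = 1, there exist partial isometries w_1,…,w_n ∈ M and a projection e ∈ M such that Σ_j w_j w_j* = 1, φ(e) = r, w_j*w_j = e, and φ(w_j x) = γ_j φ(x w_j) for all x ∈ M and 1 ≤ j ≤ n. -/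
open scoped ComplexOrder

noncomputable section

/-- `φ a = γ a φ`, i.e. `φ(ax) = γ φ(xa)` for all `x`. -/
def StateCommutes {A : Type*} [Ring A] [StarRing A] [Algebra ℂ A]
    (φ : A →ₗ[ℂ] ℂ) (γ : ℝ) (a : A) : Prop :=
  ∀ x : A, φ (a * x) = (γ : ℂ) * φ (x * a)

/-- A projection in a `*`-ring. -/
def IsProjection {A : Type*} [Mul A] [Star A] (e : A) : Prop :=
  star e = e ∧ e * e = e

/-- `Γ`-stability of a state, for a set `Γ` of (strictly positive) reals. -/
def IsGammaStable {A : Type*} [Ring A] [StarRing A] [Algebra ℂ A]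
    (Γ : Set ℝ) (φ : A →ₗ[ℂ] ℂ) : Prop :=
  ∀ (n : ℕ) (r : ℝ) (γ : Fin n → ℝ), 0 < r → r ≤ 1 → (∀ j, γ j ∈ Γ) →
    r * (∑ j, γ j) = 1 →
    ∃ (v : Fin n → A) (e : A), IsProjection e ∧
      (∑ j, v j * star (v j)) = 1 ∧ φ e = (r : ℂ) ∧
      (∀ j, star (v j) * v j = e) ∧ ∀ j, StateCommutes φ (γ j) (v j)

/-- The multiplicative group of strictly positive rationals, as a set of reals. -/
def QPos : Set ℝ := {x : ℝ | ∃ q : ℚ, 0 < q ∧ (q : ℝ) = x}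

/-!
Compose with a fixed isometry. Choose an isometry `u` with `φ u = r u φ` (from `ℚ`-stability
applied to the weights `r, 1 - r`, or `u = 1` when `r = 1`) and isometries `v_j` with
`Σ v_j v_j* = 1` and `φ v_j = (r γ_j) v_j φ` (applied to the weights `r γ_j`). Then
`w_j = v_j u*` and `e = u u*` work: `w_j* w_j = u u*`, `w_j w_j* = v_j v_j*`,
`φ(u u*) = r φ(u* u) = r`, and `φ(v_j u* x) = r γ_j φ(u* x v_j) = γ_j φ(x v_j u*)`, since
`u*` contributes the factor `r⁻¹` (for a positive functional `φ(z u*) = r φ(u* z)`).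
-/

open ComplexConjugate

section PositiveFunctional

variable {A : Type*} [Ring A] [StarRing A] [Algebra ℂ A] [StarModule ℂ A]
  {φ : A →ₗ[ℂ] ℂ}

-- Expand the real numbers `φ((1 + x)*(1 + x))` and `φ((1 + i x)*(1 + i x))`.
lemma map_star_of_nonneg (hpos : ∀ x : A, 0 ≤ φ (star x * x)) (x : A) :
    φ (star x) = conj (φ x) := by
  have him : ∀ z : A, (φ (star z * z)).im = 0 := fun z =>
    ((Complex.le_def.mp (hpos z)).2).symm
  have hsum : φ (star (1 + x) * (1 + x)) = φ 1 + (φ x + φ (star x)) + φ (star x * x) := by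
    simp only [star_add, star_one, add_mul, mul_add, one_mul, mul_one, map_add]
    ring
  have hdiff : φ (star (1 + Complex.I • x) * (1 + Complex.I • x))
      = φ 1 + Complex.I * (φ x - φ (star x)) + φ (star x * x) := by
    simp only [star_add, star_one, star_smul, add_mul, mul_add, one_mul, mul_one, map_add,
      smul_mul_assoc, mul_smul_comm, map_smul, Complex.star_def, Complex.conj_I, smul_eq_mul,
      neg_mul, neg_smul, map_neg]
    linear_combination (-φ (star x * x)) * Complex.I_mul_I
  have h1 := him (1 + x)
  have h2 := him (1 + Complex.I • x)
  have hone := him 1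
  simp only [star_one, one_mul] at hone
  rw [hsum] at h1
  rw [hdiff] at h2
  simp only [Complex.add_im, Complex.mul_im, Complex.I_re, Complex.I_im, Complex.sub_re,
    Complex.sub_im, hone, him x] at h1 h2
  apply Complex.ext <;> simp only [Complex.conj_re, Complex.conj_im] <;> linarith

lemma StateCommutes.map_mul_star (hpos : ∀ x : A, 0 ≤ φ (star x * x)) {γ : ℝ} {a : A}
    (ha : StateCommutes φ γ a) (z : A) :
    φ (z * star a) = γ * φ (star a * z) := by
  calc φ (z * star a) = conj (φ (a * star z)) := by
        rw [← map_star_of_nonneg hpos, star_mul, star_star]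
    _ = conj (γ * φ (star z * a)) := by rw [ha]
    _ = γ * φ (star a * z) := by
        rw [map_mul (starRingEnd ℂ), Complex.conj_ofReal, ← map_star_of_nonneg hpos, star_mul,
          star_star]

lemma StateCommutes.mul_star (hpos : ∀ x : A, 0 ≤ φ (star x * x)) {s γ : ℝ} {u v : A}
    (hu : StateCommutes φ s u) (hv : StateCommutes φ (s * γ) v) :
    StateCommutes φ γ (v * star u) := by
  intro x
  rw [mul_assoc, hv, ← mul_assoc x, hu.map_mul_star hpos, mul_assoc (star u)]
  push_cast
  ring

end PositiveFunctional

section Isometry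

variable {A : Type*} [Ring A] [StarRing A] {u : A}

lemma isProjection_mul_star_of_star_mul_self (hu : star u * u = 1) :
    IsProjection (u * star u) :=
  ⟨by rw [star_mul, star_star], by rw [mul_assoc, ← mul_assoc (star u), hu, one_mul]⟩

lemma star_mul_self_mul_star_of_star_mul_self {v : A} (hv : star v * v = 1) :
    star (v * star u) * (v * star u) = u * star u := by
  rw [star_mul, star_star, mul_assoc, ← mul_assoc (star v), hv, one_mul]

lemma mul_star_mul_star_self_of_star_mul_self (hu : star u * u = 1) (v : A) :
    v * star u * star (v * star u) = v * star v := by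
  rw [star_mul, star_star, mul_assoc, ← mul_assoc (star u), hu, one_mul]

end Isometry

lemma exists_isometry_stateCommutes_of_rat {A : Type*} [Ring A] [StarRing A] [Algebra ℂ A]
    {φ : A →ₗ[ℂ] ℂ}
    (hstable : ∀ q : Fin 2 → ℚ, (∀ j, 0 < q j) → (∑ j, q j) = 1 →
      ∃ v : Fin 2 → A, (∀ j, star (v j) * v j = 1) ∧ ∀ j, StateCommutes φ (q j : ℝ) (v j))
    {r : ℚ} (hr : 0 < r) (hr1 : r ≤ 1) :
    ∃ u : A, star u * u = 1 ∧ StateCommutes φ (r : ℝ) u := by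
  obtain rfl | hr1 := hr1.eq_or_lt
  · exact ⟨1, by rw [star_one, one_mul], fun x => by simp⟩
  obtain ⟨v, hv, hφv⟩ := hstable ![r, 1 - r]
    (fun j => by fin_cases j <;> simp [hr, hr1]) (by simp [Fin.sum_univ_two])
  exact ⟨v 0, hv 0, by simpa using hφv 0⟩

theorem q_stable_implies_qpos_stable_general {H : Type*} [NormedAddCommGroup H]
    [InnerProductSpace ℂ H] [CompleteSpace H]
    (M : VonNeumannAlgebra H) (φ : M →ₗ[ℂ] ℂ) (hφ : IsState φ)
    -- `φ` is `ℚ`-stable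
    (hstable : ∀ (n : ℕ) (q : Fin n → ℚ), (∀ j, 0 < q j) → (∑ j, q j) = 1 →
      ∃ v : Fin n → M,
        (∀ j, star (v j) * v j = 1) ∧
        (∑ j, v j * star (v j)) = 1 ∧
        ∀ j, StateCommutes φ (q j : ℝ) (v j)) :
    ∀ (n : ℕ) (r : ℚ) (γ : Fin n → ℚ), 0 < r → r ≤ 1 → (∀ j, 0 < γ j) →
      r * (∑ j, γ j) = 1 →
      ∃ (w : Fin n → M) (e : M), IsProjection e ∧
        (∑ j, w j * star (w j)) = 1 ∧ φ e = ((r : ℝ) : ℂ) ∧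
        (∀ j, star (w j) * w j = e) ∧
        ∀ j, StateCommutes φ (γ j : ℝ) (w j) := by
  intro n r γ hr hr1 hγ hsum
  obtain ⟨u, hu, hφu⟩ := exists_isometry_stateCommutes_of_rat
    (fun q hq hq1 => (hstable 2 q hq hq1).imp fun _ hv => ⟨hv.1, hv.2.2⟩) hr hr1
  obtain ⟨v, hv, hvsum, hφv⟩ := hstable n (fun j => r * γ j) (fun j => mul_pos hr (hγ j))
    (by rw [← Finset.mul_sum]; exact hsum)
  refine ⟨fun j => v j * star u, u * star u, isProjection_mul_star_of_star_mul_self hu, ?_, ?_,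
    fun j => star_mul_self_mul_star_of_star_mul_self (hv j), fun j => hφu.mul_star hφ.2 ?_⟩
  · simpa only [mul_star_mul_star_self_of_star_mul_self hu] using hvsum
  · rw [hφu (star u), hu, hφ.1, mul_one]
  · simpa using hφv j

theorem q_stable_implies_qpos_stable {H : Type*} [NormedAddCommGroup H]
    [InnerProductSpace ℂ H] [CompleteSpace H]
    (M : VonNeumannAlgebra H) (φ : M →ₗ[ℂ] ℂ) (hφ : IsState φ) (hφf : IsFaithfulPosMap φ)
    -- `φ` is `ℚ`-stable
    (hstable : ∀ (n : ℕ) (q : Fin n → ℚ), (∀ j, 0 < q j) → (∑ j, q j) = 1 →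
      ∃ v : Fin n → M,
        (∀ j, star (v j) * v j = 1) ∧
        (∑ j, v j * star (v j)) = 1 ∧
        ∀ j, StateCommutes φ (q j : ℝ) (v j)) :
    ∀ (n : ℕ) (r : ℚ) (γ : Fin n → ℚ), 0 < r → r ≤ 1 → (∀ j, 0 < γ j) →
      r * (∑ j, γ j) = 1 →
      ∃ (w : Fin n → M) (e : M), IsProjection e ∧
        (∑ j, w j * star (w j)) = 1 ∧ φ e = ((r : ℝ) : ℂ) ∧
        (∀ j, star (w j) * w j = e) ∧
        ∀ j, StateCommutes φ (γ j : ℝ) (w j) :=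
  q_stable_implies_qpos_stable_general M φ hφ hstable
end
end

section
/- Let Γ be a multiplicative subgroup of the strictly positive reals, M a von Neumann algebra, and φ a Γ-stable faithful state on M. Then for every γ ∈ Γ there exist m ∈ ℕ and partial isometries w_1,…,w_m ∈ M such that Σ_{j=1}^m w_j* w_j = 1 and φ(w_j x) = γ φ(x w_j) for all x ∈ M and 1 ≤ j ≤ m. -/
open scoped ComplexOrder

noncomputable section

/-!
Apply `Γ`-stability to `n = ⌈γ⌉` copies of `γ⁻¹ ∈ Γ` with `r = γ / n ≤ 1`. This gives `v₁, …, vₙ`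
with `∑ vⱼ vⱼ* = 1`, `vⱼ* vⱼ = e` a projection and `φ vⱼ = γ⁻¹ vⱼ φ`. Then `wⱼ = vⱼ*` works: a
positive functional is hermitian, so taking adjoints turns `φ vⱼ = γ⁻¹ vⱼ φ` into
`φ vⱼ* = γ vⱼ* φ`, and in a C*-algebra `vⱼ* vⱼ` idempotent forces `vⱼ vⱼ* vⱼ = vⱼ`.
-/

instance VonNeumannAlgebra.instCStarRing {H : Type*} [NormedAddCommGroup H]
    [InnerProductSpace ℂ H] [CompleteSpace H] (M : VonNeumannAlgebra H) : CStarRing M :=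
  StarSubalgebra.to_cstarRing M.toStarSubalgebra

section PartialIsometry

variable {E : Type*} [NonUnitalNormedRing E] [StarRing E] [CStarRing E]

theorem mul_star_mul_self_of_isIdempotentElem {v : E} (hv : IsIdempotentElem (star v * v)) :
    v * star v * v = v := by
  set d := v * star v * v - v
  suffices star d * d = 0 from sub_eq_zero.mp (CStarRing.star_mul_self_eq_zero_iff d |>.mp this)
  have hd : star d * d = (star v * v) * (star v * v) * (star v * v) - (star v * v) * (star v * v)
      - (star v * v) * (star v * v) + star v * v := by
    simp only [d, star_sub, star_mul, star_star, sub_mul, mul_sub]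
    noncomm_ring
  rw [hd, hv.eq, hv.eq]
  abel

end PartialIsometry

section ComplexStarAlgebra

variable {A : Type*} [Ring A] [StarRing A] [Algebra ℂ A]

theorem star_add_smul_one_mul_self [StarModule ℂ A] (x : A) (c : ℂ) :
    star (x + c • 1) * (x + c • 1) = star x * x + c • star x + star c • x + (c * star c) • 1 := by
  simp only [star_add, star_smul, star_one, mul_add, add_mul, smul_mul_assoc, mul_smul_comm,
    one_mul, mul_one, smul_add, smul_smul]
  abel

theorem map_star_of_nonneg_star_mul_self [StarModule ℂ A] (φ : A →ₗ[ℂ] ℂ)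
    (hφ : ∀ x : A, 0 ≤ φ (star x * x)) (x : A) : φ (star x) = star (φ x) := by
  have him : ∀ y : A, (φ (star y * y)).im = 0 := fun y => (hφ y).2.symm
  have him_one : (φ 1).im = 0 := by simpa using him 1
  -- polarization against `1` and `I • 1`
  have h1 := him (x + (1 : ℂ) • 1)
  have hI := him (x + Complex.I • 1)
  rw [star_add_smul_one_mul_self] at h1 hI
  simp only [one_smul, star_one, mul_one, map_add, map_smul, map_neg, smul_eq_mul, neg_smul,
    mul_neg, neg_neg, RCLike.star_def, Complex.conj_I, Complex.I_mul_I, Complex.add_im,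
    Complex.mul_im, Complex.neg_im, Complex.I_re, Complex.I_im, zero_mul, one_mul, zero_add,
    add_zero, him x, him_one] at h1 hI
  apply Complex.ext <;> simp <;> linarith

theorem StateCommutes.inv_star {φ : A →ₗ[ℂ] ℂ} (hφ : ∀ x : A, φ (star x) = star (φ x)) {γ : ℝ}
    (hγ : γ ≠ 0) {a : A} (ha : StateCommutes φ γ a) : StateCommutes φ γ⁻¹ (star a) := by
  intro x
  have hγ' : (γ : ℂ) ≠ 0 := Complex.ofReal_ne_zero.mpr hγ
  calc φ (star a * x) = star (φ (star x * a)) := by rw [← hφ, star_mul, star_star]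
    _ = star ((γ : ℂ)⁻¹ * φ (a * star x)) := by rw [ha, inv_mul_cancel_left₀ hγ']
    _ = (γ⁻¹ : ℝ) * φ (x * star a) := by
      rw [star_mul, ← hφ, star_mul, star_star, Complex.star_def, map_inv₀, Complex.conj_ofReal,
        Complex.ofReal_inv, mul_comm]

end ComplexStarAlgebra

theorem lemma_unit_general {H : Type*} [NormedAddCommGroup H]
    [InnerProductSpace ℂ H] [CompleteSpace H]
    (Γ : Set ℝ)
    -- `Γ` is a multiplicative subgroup of the strictly positive reals
    (hΓpos : ∀ γ ∈ Γ, (0 : ℝ) < γ) (hΓinv : ∀ γ ∈ Γ, γ⁻¹ ∈ Γ)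
    (M : VonNeumannAlgebra H) (φ : M →ₗ[ℂ] ℂ) (hφ : IsState φ)
    (hstable : IsGammaStable Γ φ) :
    ∀ γ ∈ Γ, ∃ (m : ℕ) (w : Fin m → M),
      -- the `w j` are partial isometries
      (∀ j, w j * star (w j) * w j = w j) ∧
      (∑ j, star (w j) * w j) = 1 ∧
      ∀ j, StateCommutes φ γ (w j) := by
  intro γ hγ
  have hγpos := hΓpos γ hγ
  have hn : (0 : ℝ) < ⌈γ⌉₊ := Nat.cast_pos.mpr (Nat.ceil_pos.mpr hγpos)
  obtain ⟨v, e, he, hsum, -, hve, hcomm⟩ :=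
    hstable ⌈γ⌉₊ (γ / ⌈γ⌉₊) (fun _ => γ⁻¹) (div_pos hγpos hn)
      ((div_le_one hn).mpr (Nat.le_ceil γ)) (fun _ => hΓinv γ hγ) (by
        simp only [Finset.sum_const, Finset.card_univ, Fintype.card_fin, nsmul_eq_mul]
        field_simp)
  refine ⟨⌈γ⌉₊, fun j => star (v j), fun j => ?_, by simpa using hsum, fun j => ?_⟩
  · have hv := mul_star_mul_self_of_isIdempotentElem (v := v j) (by rw [hve j]; exact he.2)
    simpa [mul_assoc] using congrArg star hv
  · simpa using (hcomm j).inv_star (map_star_of_nonneg_star_mul_self φ hφ.2) (inv_ne_zero hγpos.ne')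

theorem lemma_unit {H : Type*} [NormedAddCommGroup H]
    [InnerProductSpace ℂ H] [CompleteSpace H]
    (Γ : Set ℝ)
    -- `Γ` is a multiplicative subgroup of the strictly positive reals
    (hΓpos : ∀ γ ∈ Γ, (0 : ℝ) < γ) (hΓone : (1 : ℝ) ∈ Γ)
    (hΓmul : ∀ γ ∈ Γ, ∀ γ' ∈ Γ, γ * γ' ∈ Γ) (hΓinv : ∀ γ ∈ Γ, γ⁻¹ ∈ Γ)
    (M : VonNeumannAlgebra H) (φ : M →ₗ[ℂ] ℂ) (hφ : IsState φ) (hφf : IsFaithfulPosMap φ)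
    (hstable : IsGammaStable Γ φ) :
    ∀ γ ∈ Γ, ∃ (m : ℕ) (w : Fin m → M),
      -- the `w j` are partial isometries
      (∀ j, w j * star (w j) * w j = w j) ∧
      (∑ j, star (w j) * w j) = 1 ∧
      ∀ j, StateCommutes φ γ (w j) :=
  lemma_unit_general Γ hΓpos hΓinv M φ hφ hstable
end
end
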